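/- arXiv:2509.12930 — 2 statements merged into one kernel-verified Lean document; each statement's English description precedes it below -/
import Mathlib

section
/- Suppose the global gradient satisfies ∇H(θ) = ∑_{k∈K_m} w̄_k ∇H_k(θ) with w̄_k ≥ 0, ∑_{k∈K_m} w̄_k = 1, and ‖∇H_k(θ) − ∇H(θ)‖ ≤ δ_k. Let K' ⊆ K_m be the participating set with weights w'_k ≥ 0 summing to 1 over K', where w'_k ≥ w̄_k for k ∈ K'. Then ‖∑_{k∈K'} w'_k ∇H_k(θ) − ∇H(θ)‖² ≤ 2(1 − ∑_{k∈K'} w̄_k) · ∑_{k∈K_m} (w'_k + w̄_k − 2·[k∈K']·w̄_k) δ_k², where w'_k = 0 for k ∉ K' and [k∈K'] is the indicator. -/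
/-!
Since both weight vectors sum to one, the deviation is the zero-sum combination
`∑ₖ (w'ₖ - w̄ₖ) • (∇Hₖ - ∇H)`. Its coefficients are nonnegative exactly on `K'`, and the
positive and negative parts both have total mass `1 - ∑_{K'} w̄ₖ`. Splitting the sum along
the signs, `‖a - b‖² ≤ 2‖a‖² + 2‖b‖²` and Jensen's inequality on each part give the bound.
-/

open Finset

section

variable {ι E : Type*} [SeminormedAddCommGroup E] [NormedSpace ℝ E]

theorem norm_sum_smul_sq_le (s : Finset ι) {c δ : ι → ℝ} {u : ι → E}
    (hc : ∀ k ∈ s, 0 ≤ c k) (hu : ∀ k ∈ s, ‖u k‖ ≤ δ k) :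
    ‖∑ k ∈ s, c k • u k‖ ^ 2 ≤ (∑ k ∈ s, c k) * ∑ k ∈ s, c k * δ k ^ 2 := by
  have hnorm : ‖∑ k ∈ s, c k • u k‖ ≤ ∑ k ∈ s, c k * δ k :=
    (norm_sum_le _ _).trans <| sum_le_sum fun k hk => by
      rw [norm_smul_of_nonneg (hc k hk)]
      exact mul_le_mul_of_nonneg_left (hu k hk) (hc k hk)
  calc ‖∑ k ∈ s, c k • u k‖ ^ 2 ≤ (∑ k ∈ s, c k * δ k) ^ 2 := by gcongr
    _ ≤ (∑ k ∈ s, c k) * ∑ k ∈ s, c k * δ k ^ 2 :=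
      sum_sq_le_sum_mul_sum_of_sq_le_mul s hc (fun k hk => mul_nonneg (hc k hk) (sq_nonneg _))
        fun k _ => (by ring : (c k * δ k) ^ 2 = c k * (c k * δ k ^ 2)).le

theorem norm_sum_smul_sq_le_of_sum_eq_zero [DecidableEq ι] {s t : Finset ι} (hts : t ⊆ s)
    {d δ : ι → ℝ} {u : ι → E} (hpos : ∀ k ∈ t, 0 ≤ d k) (hneg : ∀ k ∈ s \ t, d k ≤ 0)
    (hsum : ∑ k ∈ s, d k = 0) (hu : ∀ k ∈ s, ‖u k‖ ≤ δ k) :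
    ‖∑ k ∈ s, d k • u k‖ ^ 2 ≤ 2 * (∑ k ∈ t, d k) * ∑ k ∈ s, |d k| * δ k ^ 2 := by
  have hsdiff : s \ t ⊆ s := sdiff_subset
  have hmass : ∑ k ∈ s \ t, -d k = ∑ k ∈ t, d k := by
    rw [← sum_sdiff hts] at hsum
    rw [sum_neg_distrib]
    linarith
  set a := ∑ k ∈ t, d k • u k
  set b := ∑ k ∈ s \ t, (-d k) • u k
  have ha : ‖a‖ ^ 2 ≤ (∑ k ∈ t, d k) * ∑ k ∈ t, d k * δ k ^ 2 :=
    norm_sum_smul_sq_le t hpos fun k hk => hu k (hts hk)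
  have hb : ‖b‖ ^ 2 ≤ (∑ k ∈ t, d k) * ∑ k ∈ s \ t, -d k * δ k ^ 2 :=
    hmass ▸ norm_sum_smul_sq_le (s \ t) (fun k hk => neg_nonneg.2 (hneg k hk))
      fun k hk => hu k (hsdiff hk)
  have habs_t : ∑ k ∈ t, |d k| * δ k ^ 2 = ∑ k ∈ t, d k * δ k ^ 2 :=
    sum_congr rfl fun k hk => by rw [abs_of_nonneg (hpos k hk)]
  have habs_st : ∑ k ∈ s \ t, |d k| * δ k ^ 2 = ∑ k ∈ s \ t, -d k * δ k ^ 2 :=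
    sum_congr rfl fun k hk => by rw [abs_of_nonpos (hneg k hk)]
  have hab : ∑ k ∈ s, d k • u k = a - b := by
    simp only [a, b, neg_smul, sum_neg_distrib, sub_neg_eq_add, ← sum_sdiff hts, add_comm]
  calc ‖∑ k ∈ s, d k • u k‖ ^ 2 ≤ (‖a‖ + ‖b‖) ^ 2 := by rw [hab]; gcongr; exact norm_sub_le a b
    _ ≤ 2 * (‖a‖ ^ 2 + ‖b‖ ^ 2) := add_sq_le
    _ ≤ 2 * (∑ k ∈ t, d k) * ∑ k ∈ s, |d k| * δ k ^ 2 := by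
      rw [← sum_sdiff hts, habs_t, habs_st]
      linarith

end

theorem participated_gradient_deviation_bound_general {ι : Type*} [DecidableEq ι]
    {E : Type*} [NormedAddCommGroup E] [InnerProductSpace ℝ E]
    (Km K' : Finset ι) (hsub : K' ⊆ Km)
    (wbar w' : ι → ℝ) (δ : ι → ℝ) (gradHk : ι → E) (gradH : E)
    (hwbar_nonneg : ∀ k ∈ Km, 0 ≤ wbar k)
    (hwbar_sum : ∑ k ∈ Km, wbar k = 1)
    (hw'_supp : ∀ k ∈ Km, k ∉ K' → w' k = 0)
    (hw'_sum : ∑ k ∈ K', w' k = 1)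
    (hw'_ge : ∀ k ∈ K', wbar k ≤ w' k)
    (hgradH : gradH = ∑ k ∈ Km, wbar k • gradHk k)
    (hdiv : ∀ k ∈ Km, ‖gradHk k - gradH‖ ≤ δ k) :
    ‖(∑ k ∈ K', w' k • gradHk k) - gradH‖ ^ 2 ≤
      2 * (1 - ∑ k ∈ K', wbar k) *
        ∑ k ∈ Km, (w' k + wbar k - 2 * (if k ∈ K' then (1 : ℝ) else 0) * wbar k) * δ k ^ 2 := by
  have hw'_sum_Km : ∑ k ∈ Km, w' k = 1 := by
    rwa [← sum_subset hsub fun k hk hk' => hw'_supp k hk hk']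
  have hdecomp : (∑ k ∈ K', w' k • gradHk k) - gradH
      = ∑ k ∈ Km, (w' k - wbar k) • (gradHk k - gradH) := by
    rw [sum_subset hsub fun k hk hk' => by rw [hw'_supp k hk hk', zero_smul]]
    simp only [sub_smul, smul_sub, sum_sub_distrib, ← sum_smul, hw'_sum_Km, hwbar_sum, ← hgradH]
    abel
  have hmass : ∑ k ∈ K', (w' k - wbar k) = 1 - ∑ k ∈ K', wbar k := by
    rw [sum_sub_distrib, hw'_sum]
  have hcoef : ∑ k ∈ Km, |w' k - wbar k| * δ k ^ 2
      = ∑ k ∈ Km, (w' k + wbar k - 2 * (if k ∈ K' then (1 : ℝ) else 0) * wbar k) * δ k ^ 2 := by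
    refine sum_congr rfl fun k hk => ?_
    split_ifs with hk'
    · rw [abs_of_nonneg (sub_nonneg.2 (hw'_ge k hk'))]; ring
    · rw [hw'_supp k hk hk', zero_sub, abs_neg, abs_of_nonneg (hwbar_nonneg k hk)]; ring
  rw [hdecomp, ← hmass, ← hcoef]
  refine norm_sum_smul_sq_le_of_sum_eq_zero hsub (fun k hk => sub_nonneg.2 (hw'_ge k hk))
    (fun k hk => ?_) (by rw [sum_sub_distrib, hw'_sum_Km, hwbar_sum, sub_self]) hdiv
  obtain ⟨hkm, hk'⟩ := mem_sdiff.1 hk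
  rw [hw'_supp k hkm hk', zero_sub, neg_nonpos]
  exact hwbar_nonneg k hkm

theorem participated_gradient_deviation_bound {ι : Type*} [DecidableEq ι]
    {E : Type*} [NormedAddCommGroup E] [InnerProductSpace ℝ E]
    (Km K' : Finset ι) (hsub : K' ⊆ Km) (hK' : K'.Nonempty)
    (wbar w' : ι → ℝ) (δ : ι → ℝ) (gradHk : ι → E) (gradH : E)
    (hwbar_nonneg : ∀ k ∈ Km, 0 ≤ wbar k)
    (hwbar_sum : ∑ k ∈ Km, wbar k = 1)
    (hw'_nonneg : ∀ k ∈ Km, 0 ≤ w' k)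
    (hw'_supp : ∀ k ∈ Km, k ∉ K' → w' k = 0)
    (hw'_sum : ∑ k ∈ K', w' k = 1)
    (hw'_ge : ∀ k ∈ K', wbar k ≤ w' k)
    (hgradH : gradH = ∑ k ∈ Km, wbar k • gradHk k)
    (hdiv : ∀ k ∈ Km, ‖gradHk k - gradH‖ ≤ δ k) :
    ‖(∑ k ∈ K', w' k • gradHk k) - gradH‖ ^ 2 ≤
      2 * (1 - ∑ k ∈ K', wbar k) *
        ∑ k ∈ Km, (w' k + wbar k - 2 * (if k ∈ K' then (1 : ℝ) else 0) * wbar k) * δ k ^ 2 :=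
  participated_gradient_deviation_bound_general Km K' hsub wbar w' δ gradHk gradH hwbar_nonneg
    hwbar_sum hw'_supp hw'_sum hw'_ge hgradH hdiv
end

section
/- The function J(B) = A / (B · log₂(1 + c/B)) is strictly decreasing and convex in B on (0, ∞), for constants A > 0 and c > 0. -/
/-!
Write `J B = (A log 2) / g B` with `g B = B log (1 + c / B)`. On `(0, ∞)` the function `g` is
positive, has derivative `g' B = log (1 + c / B) - c / (B + c) > 0` (this is `log x > 1 - 1 / x`
at `x = 1 + c / B`) and second derivative `g'' B = -c² / (B (B + c)²) ≤ 0`. So `g` is strictly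
increasing and concave, and the reciprocal of a positive concave function is convex.
-/

open Set Real

theorem ConcaveOn.convexOn_inv {𝕜 E : Type*} [Field 𝕜] [LinearOrder 𝕜] [IsStrictOrderedRing 𝕜]
    [AddCommMonoid E] [Module 𝕜 E] {s : Set E} {f : E → 𝕜} (hf : ConcaveOn 𝕜 s f)
    (hf₀ : ∀ x ∈ s, 0 < f x) : ConvexOn 𝕜 s fun x => (f x)⁻¹ := by
  refine ⟨hf.1, fun x hx y hy a b ha hb hab => ?_⟩
  have hmix : 0 < a • f x + b • f y := convex_Ioi 0 (hf₀ x hx) (hf₀ y hy) ha hb hab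
  calc (f (a • x + b • y))⁻¹ ≤ (a • f x + b • f y)⁻¹ := inv_anti₀ hmix (hf.2 hx hy ha hb hab)
    _ ≤ a • (f x)⁻¹ + b • (f y)⁻¹ := by
      simpa using (convexOn_zpow (-1)).2 (hf₀ x hx) (hf₀ y hy) ha hb hab

section MulLogOneAddDiv

variable {c : ℝ}

theorem hasDerivAt_log_one_add_div {x : ℝ} (hx : x ≠ 0) (hxc : x + c ≠ 0) :
    HasDerivAt (fun x => log (1 + c / x)) (-(c / (x * (x + c)))) x := by
  have hne : 1 + c / x ≠ 0 := by
    rw [one_add_div hx]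
    exact div_ne_zero hxc hx
  have hdiv : HasDerivAt (fun x => c / x) (-(c / x ^ 2)) x := by
    simpa [div_eq_mul_inv] using (hasDerivAt_inv hx).const_mul c
  refine ((hdiv.const_add 1).log hne).congr_deriv ?_
  field_simp

theorem hasDerivAt_mul_log_one_add_div {x : ℝ} (hx : x ≠ 0) (hxc : x + c ≠ 0) :
    HasDerivAt (fun x => x * log (1 + c / x)) (log (1 + c / x) - c / (x + c)) x := by
  refine ((hasDerivAt_id' x).mul (hasDerivAt_log_one_add_div hx hxc)).congr_deriv ?_
  field_simp
  ring

theorem hasDerivAt_log_one_add_div_sub_div {x : ℝ} (hx : x ≠ 0) (hxc : x + c ≠ 0) :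
    HasDerivAt (fun x => log (1 + c / x) - c / (x + c)) (-(c ^ 2 / (x * (x + c) ^ 2))) x := by
  have hdiv : HasDerivAt (fun x => c / (x + c)) (-(c / (x + c) ^ 2)) x := by
    simpa [div_eq_mul_inv] using (((hasDerivAt_id' x).add_const c).inv hxc).const_mul c
  refine ((hasDerivAt_log_one_add_div hx hxc).sub hdiv).congr_deriv ?_
  field_simp
  ring

theorem mul_log_one_add_div_pos (hc : 0 < c) {x : ℝ} (hx : 0 < x) : 0 < x * log (1 + c / x) :=
  mul_pos hx (log_pos (by simp only [lt_add_iff_pos_right]; positivity))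

theorem div_add_lt_log_one_add_div (hc : 0 < c) {x : ℝ} (hx : 0 < x) :
    c / (x + c) < log (1 + c / x) := by
  have hxc : 0 < x + c := by linarith
  have hinv : (1 + c / x)⁻¹ = x / (x + c) := by field_simp
  have hne : x / (x + c) ≠ 1 := by
    rw [Ne, div_eq_one_iff_eq hxc.ne']
    linarith
  have hlog := log_lt_sub_one_of_pos (div_pos hx hxc) hne
  rw [← hinv, log_inv] at hlog
  have hsub : x / (x + c) - 1 = -(c / (x + c)) := by field_simp; ring
  linarith

theorem strictMonoOn_mul_log_one_add_div (hc : 0 < c) :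
    StrictMonoOn (fun x => x * log (1 + c / x)) (Ioi 0) := by
  have hderiv (x : ℝ) (hx : 0 < x) := hasDerivAt_mul_log_one_add_div (c := c) hx.ne' (by linarith)
  refine strictMonoOn_of_hasDerivWithinAt_pos (convex_Ioi 0) (HasDerivAt.continuousOn hderiv)
    (fun x hx => (hderiv x (interior_subset hx)).hasDerivWithinAt)
    fun x hx => sub_pos.2 (div_add_lt_log_one_add_div hc (interior_subset hx))

theorem concaveOn_mul_log_one_add_div (hc : 0 ≤ c) :
    ConcaveOn ℝ (Ioi 0) (fun x => x * log (1 + c / x)) := by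
  have hxc {x : ℝ} (hx : 0 < x) : x + c ≠ 0 := by linarith
  have hderiv (x : ℝ) (hx : 0 < x) := hasDerivAt_mul_log_one_add_div hx.ne' (hxc hx)
  refine concaveOn_of_hasDerivWithinAt2_nonpos (convex_Ioi 0) (HasDerivAt.continuousOn hderiv)
    (fun x hx => (hderiv x (interior_subset hx)).hasDerivWithinAt)
    (fun x hx => (hasDerivAt_log_one_add_div_sub_div (ne_of_gt (interior_subset hx))
      (hxc (interior_subset hx))).hasDerivWithinAt) fun x hx => ?_
  have hx : 0 < x := interior_subset hx
  exact neg_nonpos.2 (by positivity)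

end MulLogOneAddDiv

theorem J_strict_anti_convex (A c : ℝ) (hA : 0 < A) (hc : 0 < c) :
    StrictAntiOn (fun B : ℝ => A / (B * Real.log (1 + c / B) / Real.log 2))
      (Set.Ioi 0) ∧
    ConvexOn ℝ (Set.Ioi 0)
      (fun B : ℝ => A / (B * Real.log (1 + c / B) / Real.log 2)) := by
  have hJ : (fun B : ℝ => A / (B * log (1 + c / B) / log 2)) =
      fun B => (A * log 2) * (B * log (1 + c / B))⁻¹ := by
    ext B
    rw [div_div_eq_mul_div, div_eq_mul_inv]
  have hK : 0 < A * log 2 := mul_pos hA (log_pos one_lt_two)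
  have hpos (B : ℝ) (hB : B ∈ Ioi 0) := mul_log_one_add_div_pos hc hB
  rw [hJ]
  constructor
  · exact fun x hx y hy hxy => mul_lt_mul_of_pos_left
      (inv_strictAnti₀ (hpos x hx) (strictMonoOn_mul_log_one_add_div hc hx hy hxy)) hK
  · exact ((concaveOn_mul_log_one_add_div hc.le).convexOn_inv hpos).smul hK.le
end
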